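/- Let u = φ ∘ f where f(p,q) = ⟨p,q⟩ on (S^n × S^n, g_0 + δ g_0) and φ : [-1,1] → ℝ is C². Then u solves -Δu + λu = λ|u|^{p-2}u on S^n × S^n if and only if φ solves the ODE -(1-t²)φ''(t) + n t φ'(t) + (λ/(1+1/δ)) φ(t) = (λ/(1+1/δ)) |φ(t)|^{p-2} φ(t) on [-1,1]. -/

import Mathlib

open scoped Real
open Set

/-- Euclidean Laplacian of `F : ℝ^m → ℝ` (sum of second partial derivatives). -/
noncomputable def eucLap {m : ℕ} (F : EuclideanSpace ℝ (Fin m) → ℝ)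
    (x : EuclideanSpace ℝ (Fin m)) : ℝ :=
  ∑ i : Fin m, fderiv ℝ (fun y => fderiv ℝ F y (EuclideanSpace.single i 1)) x
    (EuclideanSpace.single i 1)

/-- Spherical Laplacian of `u`, via the degree-zero homogeneous extension. -/
noncomputable def sphLap {m : ℕ} (u : EuclideanSpace ℝ (Fin m) → ℝ)
    (x : EuclideanSpace ℝ (Fin m)) : ℝ :=
  eucLap (fun y => u (‖y‖⁻¹ • y)) x

/-! On unit vectors, `z ↦ φ ⟪z, y⟫` extends with degree zero to `z ↦ φ (⟪z, y⟫ / ‖z‖)`;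
differentiating this twice and summing over an orthonormal basis gives the spherical Laplacian
`(1 - t²) φ''(t) - n t φ'(t)` at `t = ⟪x, y⟫`, and by symmetry the same in the second factor.
So the Laplacian `Δ₁ + δ⁻¹ Δ₂` of `φ ∘ f` at `(x, y)` is `(1 + 1/δ)` times the ODE operator at
`⟪x, y⟫`, and the two equations correspond pointwise. Every `t ∈ [-1, 1]` is `⟪x, y⟫` for some pair
of unit vectors once the dimension is at least two, so the ODE is met on all of `[-1, 1]`. -/

open scoped RealInnerProductSpace

section

variable {E : Type*} [NormedAddCommGroup E] [InnerProductSpace ℝ E]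

theorem hasFDerivAt_norm_of_ne_zero {z : E} (hz : z ≠ 0) :
    HasFDerivAt (‖·‖) (‖z‖⁻¹ • innerSL ℝ z) z := by
  have h := (hasStrictFDerivAt_norm_sq z).hasFDerivAt.sqrt (by positivity)
  simp only [Real.sqrt_sq (norm_nonneg _)] at h
  refine h.congr_fderiv ?_
  rw [← Nat.cast_smul_eq_nsmul ℝ, smul_smul]
  congr 1
  push_cast
  field_simp

theorem hasFDerivAt_norm_inv {z : E} (hz : z ≠ 0) :
    HasFDerivAt (fun w : E => ‖w‖⁻¹) (-(‖z‖ ^ 3)⁻¹ • innerSL ℝ z) z := by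
  have hz' : ‖z‖ ≠ 0 := norm_ne_zero_iff.mpr hz
  refine ((hasDerivAt_inv hz').comp_hasFDerivAt z (hasFDerivAt_norm_of_ne_zero hz)).congr_fderiv ?_
  rw [smul_smul]
  ring_nf

/-- The degree-zero homogeneous extension of `⟪·, w⟫` off the unit sphere, as in `sphLap`. -/
noncomputable def normalizedInner (w z : E) : ℝ := ⟪‖z‖⁻¹ • z, w⟫

theorem normalizedInner_eq (w z : E) : normalizedInner w z = ‖z‖⁻¹ * ⟪z, w⟫ :=
  real_inner_smul_left _ _ _

theorem normalizedInner_of_norm_eq_one {x : E} (hx : ‖x‖ = 1) (w : E) :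
    normalizedInner w x = ⟪x, w⟫ := by
  simp [normalizedInner, hx]

theorem hasFDerivAt_normalizedInner (w : E) {z : E} (hz : z ≠ 0) :
    HasFDerivAt (normalizedInner w)
      (‖z‖⁻¹ • innerSL ℝ w - (normalizedInner w z * ‖z‖⁻¹ ^ 2) • innerSL ℝ z) z := by
  have h := (hasFDerivAt_norm_inv hz).fun_mul ((hasFDerivAt_id z).inner ℝ (hasFDerivAt_const w z))
  simp only [id, ← normalizedInner_eq] at h
  refine h.congr_fderiv ?_
  ext v
  simp only [real_inner_comm, neg_smul, smul_neg, add_apply, smul_apply,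
    ContinuousLinearMap.comp_apply, ContinuousLinearMap.prod_apply, ContinuousLinearMap.id_apply,
    zero_apply, fderivInnerCLM_apply, inner_zero_right, zero_add, smul_eq_mul, neg_apply,
    coe_innerSL_apply, normalizedInner_eq, inv_pow, sub_apply]
  ring

theorem fderiv_comp_normalizedInner_apply {φ : ℝ → ℝ} (hφ : Differentiable ℝ φ) (w : E)
    {z : E} (hz : z ≠ 0) (v : E) :
    fderiv ℝ (φ ∘ normalizedInner w) z v
      = deriv φ (normalizedInner w z)
        * (‖z‖⁻¹ * (⟪w, v⟫ - normalizedInner w z * normalizedInner v z)) := by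
  rw [((hφ _).hasDerivAt.comp_hasFDerivAt z (hasFDerivAt_normalizedInner w hz)).fderiv,
    smul_apply, smul_eq_mul]
  congr 1
  simp only [normalizedInner_eq, real_inner_comm, inv_pow, sub_apply, smul_apply,
    coe_innerSL_apply, smul_eq_mul]
  ring

theorem fderiv_fderiv_comp_normalizedInner_apply {φ : ℝ → ℝ} (hφ : Differentiable ℝ φ)
    (hφ' : Differentiable ℝ (deriv φ)) {x : E} (hx : ‖x‖ = 1) (w v : E) :
    fderiv ℝ (fun z => fderiv ℝ (φ ∘ normalizedInner w) z v) x v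
      = deriv (deriv φ) ⟪x, w⟫ * ⟪w - ⟪x, w⟫ • x, v⟫ ^ 2
        + deriv φ ⟪x, w⟫
          * (3 * ⟪x, w⟫ * ⟪x, v⟫ ^ 2 - 2 * (⟪x, v⟫ * ⟪w, v⟫) - ⟪x, w⟫ * ‖v‖ ^ 2) := by
  have hx0 : x ≠ 0 := norm_ne_zero_iff.mp (by simp [hx])
  have hfirst : (fun z => fderiv ℝ (φ ∘ normalizedInner w) z v) =ᶠ[nhds x]
      fun z => deriv φ (normalizedInner w z)
        * (‖z‖⁻¹ * (⟪w, v⟫ - normalizedInner w z * normalizedInner v z)) := by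
    filter_upwards [isOpen_ne.mem_nhds hx0] with z hz
    exact fderiv_comp_normalizedInner_apply hφ w hz v
  have hN (u : E) := hasFDerivAt_normalizedInner u hx0
  have hd := ((hφ' _).hasDerivAt.comp_hasFDerivAt x (hN w)).fun_mul
    ((hasFDerivAt_norm_inv hx0).fun_mul
      ((hasFDerivAt_const ⟪w, v⟫ x).fun_sub ((hN w).fun_mul (hN v))))
  simp only [Function.comp_apply] at hd
  rw [hfirst.fderiv_eq, hd.fderiv, inner_sub_left, real_inner_smul_left]
  simp only [normalizedInner_of_norm_eq_one hx, hx, inv_one, one_smul, one_pow, mul_one, zero_sub,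
    neg_add_rev, smul_add, smul_neg, neg_smul, one_mul, add_apply, neg_apply, smul_apply, sub_apply,
    coe_innerSL_apply, smul_eq_mul, real_inner_self_eq_norm_sq]
  ring

theorem exists_mem_sphere_inner_eq {ι : Type*} {e : ι → E} (he : Orthonormal ℝ e) {i j : ι}
    (hij : i ≠ j) {t : ℝ} (ht : t ∈ Icc (-1) 1) :
    ∃ x ∈ Metric.sphere (0 : E) 1, ∃ y ∈ Metric.sphere (0 : E) 1, ⟪x, y⟫ = t := by
  have hs : √(1 - t ^ 2) ^ 2 = 1 - t ^ 2 := Real.sq_sqrt (by nlinarith [ht.1, ht.2])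
  have hij' : ⟪e i, e j⟫ = 0 := he.2 hij
  refine ⟨e i, by simp [he.1 i], t • e i + √(1 - t ^ 2) • e j, ?_, ?_⟩
  · rw [mem_sphere_zero_iff_norm, ← Real.sqrt_sq (norm_nonneg _), norm_add_sq_real]
    simp [norm_smul, he.1 i, he.1 j, real_inner_smul_left, real_inner_smul_right, hij', hs]
  · simp [inner_add_right, real_inner_smul_right, hij', he.1 i]

end

theorem sphLap_comp_inner {m : ℕ} {φ : ℝ → ℝ} (hφ : ContDiff ℝ 2 φ)
    {x y : EuclideanSpace ℝ (Fin (m + 1))} (hx : ‖x‖ = 1) (hy : ‖y‖ = 1) :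
    sphLap (fun z => φ ⟪z, y⟫) x
      = (1 - ⟪x, y⟫ ^ 2) * deriv (deriv φ) ⟪x, y⟫ - m * ⟪x, y⟫ * deriv φ ⟪x, y⟫ := by
  have hφ1 : Differentiable ℝ φ := hφ.differentiable (by norm_num)
  have hφ2 : Differentiable ℝ (deriv φ) := hφ.differentiable_deriv_two
  set b := EuclideanSpace.basisFun (Fin (m + 1)) ℝ
  have hlap : sphLap (fun z => φ ⟪z, y⟫) x
      = ∑ i, fderiv ℝ (fun z => fderiv ℝ (φ ∘ normalizedInner y) z (b i)) x (b i) := by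
    simp only [b, EuclideanSpace.basisFun_apply]
    rfl
  have htangent : ∑ i, ⟪y - ⟪x, y⟫ • x, b i⟫ ^ 2 = 1 - ⟪x, y⟫ ^ 2 := by
    rw [b.sum_sq_inner_left, norm_sub_sq_real]
    simp only [hy, one_pow, real_inner_smul_right, real_inner_comm x y, norm_smul,
      Real.norm_eq_abs, hx, mul_one, sq_abs]
    ring
  have hxx : ∑ i, ⟪x, b i⟫ ^ 2 = 1 := by rw [b.sum_sq_inner_left, hx, one_pow]
  have hxy : ∑ i, ⟪x, b i⟫ * ⟪y, b i⟫ = ⟪x, y⟫ := by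
    simpa only [real_inner_comm (b _) y] using b.sum_inner_mul_inner x y
  have hbb : ∑ i, ‖b i‖ ^ 2 = m + 1 := by simp [b]
  rw [hlap]
  simp_rw [fderiv_fderiv_comp_normalizedInner_apply hφ1 hφ2 hx]
  simp only [Finset.sum_add_distrib, Finset.sum_sub_distrib, ← Finset.mul_sum,
    htangent, hxx, hxy, hbb]
  ring

theorem invariant_yamabe_reduction_general
    (n : ℕ) (hn : 2 ≤ n) (δ lam p : ℝ) (hδ : 0 < δ)
    (φ : ℝ → ℝ) (hφ : ContDiff ℝ 2 φ) :
    (∀ x ∈ Metric.sphere (0 : EuclideanSpace ℝ (Fin (n + 1))) 1,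
      ∀ y ∈ Metric.sphere (0 : EuclideanSpace ℝ (Fin (n + 1))) 1,
      -(sphLap (fun z => φ (inner ℝ z y : ℝ)) x
          + δ⁻¹ * sphLap (fun z => φ (inner ℝ x z : ℝ)) y)
        + lam * φ (inner ℝ x y : ℝ)
        = lam * |φ (inner ℝ x y : ℝ)| ^ (p - 2) * φ (inner ℝ x y : ℝ)) ↔
    (∀ t ∈ Icc (-1 : ℝ) 1,
      -(1 - t ^ 2) * deriv (deriv φ) t + (n : ℝ) * t * deriv φ t
          + (lam / (1 + 1 / δ)) * φ t
        = (lam / (1 + 1 / δ)) * |φ t| ^ (p - 2) * φ t) := by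
  have hc : 1 + 1 / δ ≠ 0 := by positivity
  have hpointwise : ∀ x ∈ Metric.sphere (0 : EuclideanSpace ℝ (Fin (n + 1))) 1,
      ∀ y ∈ Metric.sphere (0 : EuclideanSpace ℝ (Fin (n + 1))) 1,
      (-(sphLap (fun z => φ ⟪z, y⟫) x + δ⁻¹ * sphLap (fun z => φ ⟪x, z⟫) y)
          + lam * φ ⟪x, y⟫ = lam * |φ ⟪x, y⟫| ^ (p - 2) * φ ⟪x, y⟫) ↔
        -(1 - ⟪x, y⟫ ^ 2) * deriv (deriv φ) ⟪x, y⟫ + n * ⟪x, y⟫ * deriv φ ⟪x, y⟫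
          + lam / (1 + 1 / δ) * φ ⟪x, y⟫
          = lam / (1 + 1 / δ) * |φ ⟪x, y⟫| ^ (p - 2) * φ ⟪x, y⟫ := by
    intro x hx y hy
    rw [mem_sphere_zero_iff_norm] at hx hy
    have hleft : sphLap (fun z => φ ⟪x, z⟫) y
        = (1 - ⟪x, y⟫ ^ 2) * deriv (deriv φ) ⟪x, y⟫ - n * ⟪x, y⟫ * deriv φ ⟪x, y⟫ := by
      simpa only [real_inner_comm x] using sphLap_comp_inner hφ hy hx
    rw [sphLap_comp_inner hφ hx hy, hleft]
    set μ := lam / (1 + 1 / δ) with hμ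
    have hlam : lam = (1 + 1 / δ) * μ := by rw [hμ]; field_simp
    rw [hlam]
    conv_rhs => rw [← mul_right_inj' hc]
    constructor <;> intro h <;> linear_combination h
  constructor
  · intro H t ht
    obtain ⟨x, hx, y, hy, rfl⟩ := exists_mem_sphere_inner_eq
      (EuclideanSpace.basisFun (Fin (n + 1)) ℝ).orthonormal
      (i := 0) (j := 1) (by simp [Fin.ext_iff]; omega) ht
    exact (hpointwise x hx y hy).1 (H x hx y hy)
  · intro H x hx y hy
    have ht : ⟪x, y⟫ ∈ Icc (-1 : ℝ) 1 := by
      rw [mem_sphere_zero_iff_norm] at hx hy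
      simpa [hx, hy, abs_le] using abs_real_inner_le_norm x y
    exact (hpointwise x hx y hy).2 (H _ ht)

/-- for a C² function `φ : [-1,1] → ℝ`, the invariant function
`u = φ ∘ f`, `f(p,q) = ⟨p,q⟩`, solves `-Δu + λu = λ|u|^{p-2}u` on
`(S^n × S^n, g₀ + δ g₀)` (the Laplacian of the product metric being
`Δ₁ + δ⁻¹ Δ₂`) if and only if `φ` solves
`-(1-t²)φ'' + n t φ' + (λ/(1+1/δ))φ = (λ/(1+1/δ))|φ|^{p-2}φ` on `[-1,1]`. -/
theorem invariant_yamabe_reduction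
    (n : ℕ) (hn : 2 ≤ n) (δ lam p : ℝ) (hδ : 0 < δ) (hlam : 0 < lam) (hp : 2 < p)
    (φ : ℝ → ℝ) (hφ : ContDiff ℝ 2 φ) :
    (∀ x ∈ Metric.sphere (0 : EuclideanSpace ℝ (Fin (n + 1))) 1,
      ∀ y ∈ Metric.sphere (0 : EuclideanSpace ℝ (Fin (n + 1))) 1,
      -(sphLap (fun z => φ (inner ℝ z y : ℝ)) x
          + δ⁻¹ * sphLap (fun z => φ (inner ℝ x z : ℝ)) y)
        + lam * φ (inner ℝ x y : ℝ)
        = lam * |φ (inner ℝ x y : ℝ)| ^ (p - 2) * φ (inner ℝ x y : ℝ)) ↔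
    (∀ t ∈ Icc (-1 : ℝ) 1,
      -(1 - t ^ 2) * deriv (deriv φ) t + (n : ℝ) * t * deriv φ t
          + (lam / (1 + 1 / δ)) * φ t
        = (lam / (1 + 1 / δ)) * |φ t| ^ (p - 2) * φ t) :=
  invariant_yamabe_reduction_general n hn δ lam p hδ φ hφ
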